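/- Let ε ∈ (0,1] and let π : [0,∞) → [0,1] be any function with π(x) = 1 for x ≥ ε and π(x) = 0 for x ≤ ε/2. Then for every r ≥ 0, f′(r) γ̃(r) + 2β² f″(r) π(r)² ≤ −2β² r + ℓ(ε), where ℓ(ε) := 2β² ε + δ ( sup_{s ∈ [0,ε]} max(γ(s), 0) + K_σ ε ). -/

import Mathlib

/-!
Write `Γ(u) = ∫₀ᵘ γ̃`. Then `f' = e^{-Γ/(2β²)} ∫_r^∞ g` and `e^{-Γ/(2β²)} g(r) = r`, so
`2β² f'' = -γ̃ f' - 2β² r` and the left-hand side equals `-2β² r + (1 - π²) (2β² r + f' γ̃)`.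
The correction vanishes for `r ≥ ε`. For `r < ε`, `2β² r ≤ 2β² ε` and
`f' γ̃ ≤ δ (sup γ⁺ + K_σ ε)`: this is clear if `γ̃(r) ≤ 0`; otherwise, since `γ̃(v) / v` is
nonincreasing, `γ̃ ≥ 0` on `[0, r]`, so `Γ(r) ≥ 0` and `f'(r) ≤ ∫_0^∞ g = δ`.
The integral `δ` is finite because `γ̃(v) = (K_σ - K₂) v` for `v ≥ 2R`, a Gaussian tail.
-/

open MeasureTheory Set

/-- `γ(r) = driftSlope K₁ K₂ R r * r`. -/
noncomputable def driftSlope (K₁ K₂ R r : ℝ) : ℝ :=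
  if r ≤ R then K₁ else if r ≤ 2 * R then -((K₁ + K₂) / R) * (r - R) + K₁ else -K₂

section driftSlope

variable {K₁ K₂ R : ℝ}

theorem continuous_driftSlope (hR : 0 < R) : Continuous (driftSlope K₁ K₂ R) := by
  refine Continuous.if_le continuous_const
    (Continuous.if_le (by fun_prop) continuous_const continuous_id continuous_const ?_)
    continuous_id continuous_const ?_
  · rintro x rfl
    field_simp
    ring
  · rintro x rfl
    rw [if_pos (by linarith)]
    ring

theorem driftSlope_of_two_mul_le (hR : 0 < R) {r : ℝ} (hr : 2 * R ≤ r) :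
    driftSlope K₁ K₂ R r = -K₂ := by
  unfold driftSlope
  split_ifs with h₁ h₂
  · linarith
  · rw [le_antisymm h₂ hr]
    field_simp
    ring
  · rfl

theorem antitone_driftSlope (hR : 0 < R) (hK : 0 ≤ K₁ + K₂) :
    Antitone (driftSlope K₁ K₂ R) := by
  have hk : 0 ≤ (K₁ + K₂) / R := by positivity
  have hkR : (K₁ + K₂) / R * R = K₁ + K₂ := div_mul_cancel₀ _ hR.ne'
  intro x y hxy
  unfold driftSlope
  split_ifs <;> nlinarith

end driftSlope

theorem Antitone.mul_nonneg_of_mul_pos_of_le {φ : ℝ → ℝ} (hφ : Antitone φ) {r v : ℝ}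
    (hr : 0 < φ r * r) (hv : 0 ≤ v) (hvr : v ≤ r) : 0 ≤ φ v * v := by
  have hr₀ : 0 < r := by
    by_contra! h
    obtain rfl : r = 0 := by linarith
    simp at hr
  exact mul_nonneg ((pos_of_mul_pos_left hr hr₀.le).le.trans (hφ hvr)) hv

theorem continuous_mul_exp_integral {φ : ℝ → ℝ} (hφ : Continuous φ) (c : ℝ) :
    Continuous fun s => s * Real.exp (c * ∫ v in (0 : ℝ)..s, φ v) := by
  have : Continuous fun s => ∫ v in (0 : ℝ)..s, φ v := continuous_iff_continuousAt.2
    fun s => (hφ.integral_hasStrictDerivAt 0 s).hasDerivAt.continuousAt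
  fun_prop

theorem intervalIntegral_eq_of_eq_neg_mul {φ : ℝ → ℝ} (hφ : Continuous φ) {κ a s : ℝ}
    (htail : ∀ v, a ≤ v → φ v = -κ * v) (hs : a ≤ s) :
    ∫ v in (0 : ℝ)..s, φ v = (∫ v in (0 : ℝ)..a, φ v) + κ / 2 * a ^ 2 - κ / 2 * s ^ 2 := by
  have hlin : ∫ v in a..s, φ v = ∫ v in a..s, -κ * v :=
    intervalIntegral.integral_congr fun v hv => htail v (uIcc_of_le hs ▸ hv).1
  rw [← intervalIntegral.integral_add_adjacent_intervals (hφ.intervalIntegrable 0 a)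
    (hφ.intervalIntegrable a s), hlin, intervalIntegral.integral_const_mul, integral_id]
  ring

theorem integrableOn_Ioi_mul_exp_integral {φ : ℝ → ℝ} (hφ : Continuous φ) {c κ a : ℝ}
    (hc : 0 < c) (hκ : 0 < κ) (htail : ∀ v, a ≤ v → φ v = -κ * v) (b : ℝ) :
    IntegrableOn (fun s => s * Real.exp (c * ∫ v in (0 : ℝ)..s, φ v)) (Ioi b) := by
  have hgauss : IntegrableOn (fun s => s * Real.exp (c * ∫ v in (0 : ℝ)..s, φ v)) (Ioi a) := by
    refine (((integrable_mul_exp_neg_mul_sq (by positivity : 0 < c * κ / 2)).const_mul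
      (Real.exp (c * ((∫ v in (0 : ℝ)..a, φ v) + κ / 2 * a ^ 2)))).integrableOn).congr_fun
      (fun s hs => ?_) measurableSet_Ioi
    dsimp only
    rw [intervalIntegral_eq_of_eq_neg_mul hφ htail (le_of_lt hs), mul_left_comm, ← Real.exp_add]
    congr 2
    ring
  have hIoc : IntegrableOn (fun s => s * Real.exp (c * ∫ v in (0 : ℝ)..s, φ v)) (Ioc b a) :=
    (continuous_mul_exp_integral hφ c).integrableOn_Ioc
  refine (hIoc.union hgauss).mono_set fun s hs => ?_
  rcases le_or_gt s a with h | h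
  · exact Or.inl ⟨hs, h⟩
  · exact Or.inr h

theorem hasDerivAt_setIntegral_Ioi {g : ℝ → ℝ} (hg : Continuous g)
    (hi : ∀ a, IntegrableOn g (Ioi a)) (r : ℝ) :
    HasDerivAt (fun u => ∫ s in Ioi u, g s) (-g r) r := by
  have h : (fun u => ∫ s in Ioi u, g s) =
      fun u => (∫ s in Ioi 0, g s) - ∫ s in (0 : ℝ)..u, g s := by
    funext u
    rw [← intervalIntegral.integral_Ioi_sub_Ioi' (hi 0) (hi u), sub_sub_cancel]
  rw [h]
  exact (hg.integral_hasStrictDerivAt 0 r).hasDerivAt.const_sub _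

theorem hasDerivAt_exp_neg_mul_mul_setIntegral_Ioi {G g : ℝ → ℝ} {c r G' : ℝ}
    (hG : HasDerivAt G G' r) (hg : Continuous g) (hi : ∀ a, IntegrableOn g (Ioi a))
    (hgr : g r = r * Real.exp (c * G r)) :
    HasDerivAt (fun u => Real.exp (-c * G u) * ∫ s in Ioi u, g s)
      (-c * G' * (Real.exp (-c * G r) * ∫ s in Ioi r, g s) - r) r := by
  refine ((hG.const_mul (-c)).exp.mul (hasDerivAt_setIntegral_Ioi hg hi r)).congr_deriv ?_
  have : Real.exp (-c * G r) * Real.exp (c * G r) = 1 := by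
    rw [← Real.exp_add]; simp
  rw [hgr]
  linear_combination -r * this

theorem exp_neg_mul_mul_setIntegral_Ioi_le {g : ℝ → ℝ} {c G r : ℝ} (hc : 0 ≤ c)
    (hG : 0 ≤ G) (hr : 0 ≤ r) (hg : ∀ s, 0 < s → 0 ≤ g s) (hi : IntegrableOn g (Ioi 0)) :
    Real.exp (-c * G) * ∫ s in Ioi r, g s ≤ ∫ s in Ioi 0, g s := by
  have htail : 0 ≤ ∫ s in Ioi r, g s :=
    setIntegral_nonneg measurableSet_Ioi fun s hs => hg s (hr.trans_lt hs)
  calc Real.exp (-c * G) * ∫ s in Ioi r, g s ≤ 1 * ∫ s in Ioi r, g s := by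
        gcongr
        exact Real.exp_le_one_iff.2 (by nlinarith)
    _ ≤ ∫ s in Ioi 0, g s := by
        rw [one_mul]
        exact setIntegral_mono_set hi ((ae_restrict_iff' measurableSet_Ioi).2 (ae_of_all _ hg))
          (Ioi_subset_Ioi hr).eventuallyLE

theorem le_csSup_image_max_zero {φ : ℝ → ℝ} (hφ : Continuous φ) {a b r : ℝ}
    (hr : r ∈ Icc a b) :
    max (φ r) 0 ≤ sSup ((fun s => max (φ s) 0) '' Icc a b) :=
  le_csSup (isCompact_Icc.bddAbove_image (by fun_prop)) (mem_image_of_mem _ hr)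

theorem one_sub_sq_mul_add_le {p B r ε F Γ D : ℝ} (hp : p ∈ Icc 0 1) (hB : 0 ≤ B)
    (hε : 0 ≤ ε) (hD : 0 ≤ D) (hp₁ : ε ≤ r → p = 1) (hFΓ : r < ε → F * Γ ≤ D) :
    (1 - p ^ 2) * (B * r + F * Γ) ≤ B * ε + D := by
  rcases le_or_gt ε r with h | h
  · rw [hp₁ h]
    nlinarith
  · have hq : 0 ≤ 1 - p ^ 2 := by nlinarith [hp.1, hp.2]
    have hq₁ : 1 - p ^ 2 ≤ 1 := by nlinarith [hp.1]
    have hBr : (1 - p ^ 2) * (B * r) ≤ B * ε := by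
      rcases le_or_gt 0 r with hr | hr
      · nlinarith [mul_le_mul_of_nonneg_left h.le hB, mul_nonneg hB hr]
      · nlinarith [mul_nonpos_of_nonneg_of_nonpos hB hr.le]
    have hFΓD : (1 - p ^ 2) * (F * Γ) ≤ D := by
      rcases le_or_gt 0 (F * Γ) with hFΓ₀ | hFΓ₀
      · nlinarith [hFΓ h]
      · nlinarith
    linarith [mul_add (1 - p ^ 2) (B * r) (F * Γ)]

theorem exp_neg_mul_mul_setIntegral_Ioi_mul_le {φ g : ℝ → ℝ} (hφ : Antitone φ) {c r M : ℝ}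
    (hc : 0 ≤ c) (hr : 0 ≤ r) (hg : ∀ s, 0 < s → 0 ≤ g s) (hi : IntegrableOn g (Ioi 0))
    (hM₀ : 0 ≤ M) (hM : φ r * r ≤ M) :
    Real.exp (-c * ∫ v in (0 : ℝ)..r, φ v * v) * (∫ s in Ioi r, g s) * (φ r * r) ≤
      (∫ s in Ioi 0, g s) * M := by
  have hF : 0 ≤ Real.exp (-c * ∫ v in (0 : ℝ)..r, φ v * v) * ∫ s in Ioi r, g s :=
    mul_nonneg (Real.exp_pos _).le
      (setIntegral_nonneg measurableSet_Ioi fun s hs => hg s (hr.trans_lt hs))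
  rcases le_or_gt (φ r * r) 0 with hneg | hpos
  · exact (mul_nonpos_of_nonneg_of_nonpos hF hneg).trans
      (mul_nonneg (setIntegral_nonneg measurableSet_Ioi hg) hM₀)
  · have hG : 0 ≤ ∫ v in (0 : ℝ)..r, φ v * v := intervalIntegral.integral_nonneg hr
      fun v hv => hφ.mul_nonneg_of_mul_pos_of_le hpos hv.1 hv.2
    exact mul_le_mul (exp_neg_mul_mul_setIntegral_Ioi_le hc hG hr hg hi) hM hpos.le
      (setIntegral_nonneg measurableSet_Ioi hg)

theorem stmt6_general (β K₁ Kσ K₂ R : ℝ) (hβ : β ≠ 0) (hK₁ : 0 ≤ K₁) (hKσ : 0 < Kσ)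
    (hK₂ : Kσ < K₂) (hR : 0 < R)
    (γ γt g : ℝ → ℝ) (δ : ℝ) (f' : ℝ → ℝ)
    (hγ : ∀ r, γ r = if r ≤ R then K₁ * r
      else if r ≤ 2 * R then (-((K₁ + K₂) / R) * (r - R) + K₁) * r
      else -K₂ * r)
    (hγt : ∀ v, γt v = γ v + Kσ * v)
    (hg : ∀ s, g s = s * Real.exp ((1 / (2 * β ^ 2)) * ∫ v in (0 : ℝ)..s, γt v))
    (hδ : δ = ∫ s in Ioi (0 : ℝ), g s)
    (hf' : ∀ r, f' r = Real.exp (-(1 / (2 * β ^ 2)) * ∫ v in (0 : ℝ)..r, γt v) *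
      ∫ s in Ioi r, g s)
    (ε : ℝ) (hε : 0 < ε)
    (π : ℝ → ℝ) (hπ : ∀ x, 0 ≤ x → π x ∈ Icc (0 : ℝ) 1)
    (hπ1 : ∀ x, ε ≤ x → π x = 1)
    (ℓ : ℝ)
    (hℓ : ℓ = 2 * β ^ 2 * ε +
      δ * (sSup ((fun s => max (γ s) 0) '' Icc (0 : ℝ) ε) + Kσ * ε)) :
    ∀ f'' : ℝ → ℝ, (∀ r : ℝ, 0 ≤ r → HasDerivAt f' (f'' r) r) →
      ∀ r : ℝ, 0 ≤ r →
        f' r * γt r + 2 * β ^ 2 * f'' r * (π r) ^ 2 ≤ -(2 * β ^ 2) * r + ℓ := by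
  intro f'' hf'' r hr
  obtain rfl : γ = fun s => driftSlope K₁ K₂ R s * s :=
    funext fun s => by rw [hγ, driftSlope]; split_ifs <;> ring
  obtain rfl : γt = fun v => (driftSlope K₁ K₂ R v + Kσ) * v :=
    funext fun v => by rw [hγt]; ring
  obtain rfl := funext hg
  beta_reduce at hℓ hf' ⊢
  have hslope : Continuous (driftSlope K₁ K₂ R) := continuous_driftSlope hR
  have hγt : Continuous fun v => (driftSlope K₁ K₂ R v + Kσ) * v := by fun_prop
  have hi := integrableOn_Ioi_mul_exp_integral hγt (by positivity : 0 < 1 / (2 * β ^ 2))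
    (sub_pos.2 hK₂) (a := 2 * R) fun v hv => by rw [driftSlope_of_two_mul_le hR hv]; ring
  have hode : 2 * β ^ 2 * f'' r =
      -((driftSlope K₁ K₂ R r + Kσ) * r) * f' r - 2 * β ^ 2 * r := by
    have hd := hasDerivAt_exp_neg_mul_mul_setIntegral_Ioi (c := 1 / (2 * β ^ 2))
      (hγt.integral_hasStrictDerivAt 0 r).hasDerivAt (continuous_mul_exp_integral hγt _) hi rfl
    rw [← funext hf', ← hf'] at hd
    rw [(hf'' r hr).unique hd]
    field_simp
  set S := sSup ((fun s => max (driftSlope K₁ K₂ R s * s) 0) '' Icc 0 ε)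
  have hS : ∀ s ∈ Icc 0 ε, max (driftSlope K₁ K₂ R s * s) 0 ≤ S := fun s hs =>
    le_csSup_image_max_zero (φ := fun s => driftSlope K₁ K₂ R s * s) (by fun_prop) hs
  have hS₀ : 0 ≤ S + Kσ * ε :=
    add_nonneg ((le_max_right _ _).trans (hS 0 ⟨le_rfl, hε.le⟩)) (by positivity)
  have hg₀ (s : ℝ) (hs : 0 < s) : 0 ≤ s * Real.exp (1 / (2 * β ^ 2) *
      ∫ v in (0 : ℝ)..s, (driftSlope K₁ K₂ R v + Kσ) * v) := by positivity
  have hδ₀ : 0 ≤ δ := hδ ▸ setIntegral_nonneg measurableSet_Ioi hg₀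
  have hsmall (hrε : r < ε) :
      f' r * ((driftSlope K₁ K₂ R r + Kσ) * r) ≤ δ * (S + Kσ * ε) := by
    have hM : (driftSlope K₁ K₂ R r + Kσ) * r ≤ S + Kσ * ε := by
      nlinarith [(le_max_left _ _).trans (hS r ⟨hr, hrε.le⟩)]
    rw [hf', hδ]
    exact exp_neg_mul_mul_setIntegral_Ioi_mul_le
      ((antitone_driftSlope hR (by linarith)).add_const Kσ) (by positivity) hr hg₀ (hi 0) hS₀ hM
  rw [hℓ, hode]
  linear_combination one_sub_sq_mul_add_le (B := 2 * β ^ 2) (hπ r hr) (by positivity) hε.le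
    (mul_nonneg hδ₀ hS₀) (hπ1 r) hsmall

/-- for `ε ∈ (0,1]` and any `π : [0,∞) → [0,1]` with `π = 1` on `[ε,∞)` and
`π = 0` on `[0, ε/2]`, one has for every `r ≥ 0`
`f′(r) γ̃(r) + 2β² f″(r) π(r)² ≤ −2β² r + ℓ(ε)` where
`ℓ(ε) = 2β² ε + δ (sup_{s ∈ [0,ε]} γ(s)⁺ + K_σ ε)`. -/
theorem stmt6 (β K₁ Kσ K₂ R : ℝ) (hβ : β ≠ 0) (hK₁ : 0 ≤ K₁) (hKσ : 0 < Kσ)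
    (hK₂ : Kσ < K₂) (hR : 0 < R)
    (γ γt g : ℝ → ℝ) (δ : ℝ) (f f' : ℝ → ℝ)
    (hγ : ∀ r, γ r = if r ≤ R then K₁ * r
      else if r ≤ 2 * R then (-((K₁ + K₂) / R) * (r - R) + K₁) * r
      else -K₂ * r)
    (hγt : ∀ v, γt v = γ v + Kσ * v)
    (hg : ∀ s, g s = s * Real.exp ((1 / (2 * β ^ 2)) * ∫ v in (0 : ℝ)..s, γt v))
    (hδ : δ = ∫ s in Ioi (0 : ℝ), g s)
    (hf : ∀ r, f r = ∫ u in (0 : ℝ)..r,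
      Real.exp (-(1 / (2 * β ^ 2)) * ∫ v in (0 : ℝ)..u, γt v) * ∫ s in Ioi u, g s)
    (hf' : ∀ r, f' r = Real.exp (-(1 / (2 * β ^ 2)) * ∫ v in (0 : ℝ)..r, γt v) *
      ∫ s in Ioi r, g s)
    (ε : ℝ) (hε : 0 < ε) (hε1 : ε ≤ 1)
    (π : ℝ → ℝ) (hπ : ∀ x, 0 ≤ x → π x ∈ Icc (0 : ℝ) 1)
    (hπ1 : ∀ x, ε ≤ x → π x = 1) (hπ0 : ∀ x, 0 ≤ x → x ≤ ε / 2 → π x = 0)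
    (ℓ : ℝ)
    (hℓ : ℓ = 2 * β ^ 2 * ε +
      δ * (sSup ((fun s => max (γ s) 0) '' Icc (0 : ℝ) ε) + Kσ * ε)) :
    ∀ f'' : ℝ → ℝ, (∀ r : ℝ, 0 ≤ r → HasDerivAt f' (f'' r) r) →
      ∀ r : ℝ, 0 ≤ r →
        f' r * γt r + 2 * β ^ 2 * f'' r * (π r) ^ 2 ≤ -(2 * β ^ 2) * r + ℓ :=
  stmt6_general β K₁ Kσ K₂ R hβ hK₁ hKσ hK₂ hR γ γt g δ f' hγ hγt hg hδ hf' ε hε π hπ hπ1 ℓ hℓ
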